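/- arXiv:1712.06835 — 7 statements merged into one kernel-verified Lean document; each statement's English description precedes it below -/
import Mathlib

section
/- Let p be a prime number, ℓ ≥ 1 a natural number, i ∈ {1,…,ℓ}, a an integer, and b a natural number not divisible by p. Then for every tuple of integers (x₁,…,x_ℓ), the product C(a·x_i, b) · ∏_{j=1}^{ℓ} C(x_j - 1, p-1) is congruent to 0 modulo p. -/
private lemma choose_int_congr (p k : ℕ) {z z' : ℤ} (h : ((p : ℤ) * k.factorial) ∣ z - z') :
    (p : ℤ) ∣ Ring.choose z k - Ring.choose z' k := by
  have hd : z - z' ∣ (descPochhammer ℤ k).eval z - (descPochhammer ℤ k).eval z' :=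
    Polynomial.sub_dvd_eval_sub z z' _
  have h1 : ∀ w : ℤ, (descPochhammer ℤ k).eval w = (k.factorial : ℤ) * Ring.choose w k := by
    intro w
    rw [Polynomial.eval_eq_smeval, Ring.descPochhammer_eq_factorial_smul_choose]
    simp [nsmul_eq_mul]
  have hdvd : ((p : ℤ) * k.factorial) ∣
      (k.factorial : ℤ) * (Ring.choose z k - Ring.choose z' k) := by
    rw [mul_sub, ← h1, ← h1]
    exact dvd_trans h hd
  have hfac : (k.factorial : ℤ) ≠ 0 := by exact_mod_cast k.factorial_ne_zero
  rw [mul_comm (p : ℤ) _] at hdvd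
  exact (mul_dvd_mul_iff_left hfac).mp hdvd

private lemma choose_int_eq_nat (p : ℕ) (hp : 0 < p) (k : ℕ) (z : ℤ) :
    ∃ n : ℕ, ((n : ℤ) % p = z % p) ∧
      ((Ring.choose z k : ℤ) : ZMod p) = (n.choose k : ZMod p) := by
  set m : ℤ := (p : ℤ) * k.factorial with hm
  have hm0 : 0 < m := by
    have h1 : (0 : ℤ) < k.factorial := by exact_mod_cast k.factorial_pos
    have hp' : (0 : ℤ) < p := by exact_mod_cast hp
    positivity
  have hnn : (0 : ℤ) ≤ z % m := Int.emod_nonneg z hm0.ne'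
  have hcast : (((z % m).toNat : ℤ)) = z % m := Int.toNat_of_nonneg hnn
  have hsub : m ∣ ((z % m).toNat : ℤ) - z := by
    refine ⟨-(z / m), ?_⟩
    rw [hcast, Int.emod_def]
    ring
  refine ⟨(z % m).toNat, ?_, ?_⟩
  · rw [hcast]
    exact Int.emod_emod_of_dvd z ⟨(k.factorial : ℤ), rfl⟩
  · have hp' : (p : ℤ) ∣ Ring.choose ((z % m).toNat : ℤ) k - Ring.choose z k :=
      choose_int_congr p k hsub
    have h0 : ((Ring.choose ((z % m).toNat : ℤ) k - Ring.choose z k : ℤ) : ZMod p) = 0 :=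
      (ZMod.intCast_zmod_eq_zero_iff_dvd _ p).mpr hp'
    rw [Int.cast_sub, sub_eq_zero] at h0
    rw [← h0, Ring.choose_natCast]
    push_cast
    ring
private lemma lucas_cast (p : ℕ) [Fact p.Prime] (n k : ℕ) :
    (n.choose k : ZMod p) = ((n % p).choose (k % p) * (n / p).choose (k / p) : ℕ) :=
  (ZMod.natCast_eq_natCast_iff _ _ _).mpr Choose.choose_modEq_choose_mod_mul_choose_div_nat

private lemma lemB (p : ℕ) (hp : p.Prime) {z : ℤ} (hz : (p : ℤ) ∣ z) {b : ℕ} (hb : ¬ p ∣ b) :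
    ((Ring.choose z b : ℤ) : ZMod p) = 0 := by
  haveI : Fact p.Prime := ⟨hp⟩
  obtain ⟨n, hn, he⟩ := choose_int_eq_nat p hp.pos b z
  have hnp : n % p = 0 := by
    have h1 : (n : ℤ) % p = 0 := by rw [hn, Int.emod_eq_zero_of_dvd hz]
    have h2 : p ∣ n := Int.natCast_dvd_natCast.mp (Int.dvd_of_emod_eq_zero h1)
    exact Nat.mod_eq_zero_of_dvd h2
  have hbp : 0 < b % p := Nat.pos_of_ne_zero (fun h => hb (Nat.dvd_of_mod_eq_zero h))
  rw [he, lucas_cast, hnp, Nat.choose_eq_zero_of_lt hbp]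
  simp

private lemma lemC (p : ℕ) (hp : p.Prime) {z : ℤ} (hz : ¬ (p : ℤ) ∣ z) :
    ((Ring.choose (z - 1) (p - 1) : ℤ) : ZMod p) = 0 := by
  haveI : Fact p.Prime := ⟨hp⟩
  obtain ⟨n, hn, he⟩ := choose_int_eq_nat p hp.pos (p - 1) (z - 1)
  have hnlt : n % p < p - 1 := by
    rcases Nat.lt_or_ge (n % p) (p - 1) with h | h
    · exact h
    · exfalso
      have h1 : n % p = p - 1 := le_antisymm (Nat.le_pred_of_lt (Nat.mod_lt n hp.pos)) h
      apply hz
      have h2 : (n : ℤ) % p = (p : ℤ) - 1 := by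
        rw [← Int.natCast_mod, h1]
        push_cast [Nat.cast_sub hp.one_le]
        ring
      have h3 : (z - 1) % p = (p : ℤ) - 1 := by rw [← hn, h2]
      have hp2 : 2 ≤ (p : ℤ) := by exact_mod_cast hp.two_le
      have h4 : (z - 1) % p = ((p : ℤ) - 1) % p := by
        rw [h3, Int.emod_eq_of_lt (by omega) (by omega)]
      have h5 : (p : ℤ) ∣ ((p : ℤ) - 1) - (z - 1) := Int.ModEq.dvd h4
      have h6 : ((p : ℤ) - 1) - (z - 1) = p - z := by ring
      rw [h6] at h5
      have h7 := dvd_sub (dvd_refl (p : ℤ)) h5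
      simpa using h7
  rw [he, lucas_cast, Nat.mod_eq_of_lt (Nat.sub_lt hp.pos one_pos),
    Nat.choose_eq_zero_of_lt hnlt]
  simp

/-- Let `p` be a prime number, `ℓ ≥ 1`, `i ∈ {1,…,ℓ}`, `a` an integer, and `b` a
natural number not divisible by `p`. Then for every tuple of integers `(x₁,…,x_ℓ)`,
the product `C(a·x_i, b) · ∏_{j=1}^{ℓ} C(x_j - 1, p-1)` is congruent to `0` mod `p`. -/
theorem stmt1 (p : ℕ) (hp : p.Prime) (ℓ : ℕ) (hℓ : 1 ≤ ℓ) (i : Fin ℓ)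
    (a : ℤ) (b : ℕ) (hb : ¬ p ∣ b) (x : Fin ℓ → ℤ) :
    ((Ring.choose (a * x i) b * ∏ j, Ring.choose (x j - 1) (p - 1) : ℤ) : ZMod p) = 0 := by
  haveI : Fact p.Prime := ⟨hp⟩
  by_cases hall : ∀ j, (p : ℤ) ∣ x j
  · have h0 : ((Ring.choose (a * x i) b : ℤ) : ZMod p) = 0 :=
      lemB p hp (Dvd.dvd.mul_left (hall i) a) hb
    rw [Int.cast_mul, h0, zero_mul]
  · push_neg at hall
    obtain ⟨j, hj⟩ := hall
    have h0 : (((∏ j, Ring.choose (x j - 1) (p - 1) : ℤ)) : ZMod p) = 0 := by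
      push_cast
      exact Finset.prod_eq_zero (Finset.mem_univ j) (lemC p hp hj)
    rw [Int.cast_mul, h0, mul_zero]
end

section
/- Let p be a prime number, a an integer, and b a natural number. Then for every integer m, C(a·(p·m), p·b) is congruent to C(a·m, b) modulo p. -/
/-!
In characteristic `p` the binomial series satisfy `(1 + X) ^ (p * n) = (1 + X ^ p) ^ n` for every
integer `n`: for `n ≥ 0` this is the Frobenius identity `(1 + X) ^ p = 1 + X ^ p`, and negative
exponents follow since both sides are multiplicative in `n`. Comparing the coefficients of
`X ^ (p * b)` gives the congruence.
-/

namespace PowerSeries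

variable (A : Type*) [CommRing A] (p : ℕ) [hp : Fact p.Prime] [CharP A p]

theorem binomialSeries_prime_mul_natCast (k : ℕ) :
    binomialSeries A ((p : ℤ) * k) = expand p hp.out.ne_zero (binomialSeries A (k : ℤ)) := by
  have frobenius : ((1 : A⟦X⟧) + X) ^ p = 1 + X ^ p := by
    have := charP_of_injective_ringHom (C_injective (R := A)) p
    rw [add_pow_char, one_pow]
  rw [← Nat.cast_mul, binomialSeries_nat, binomialSeries_nat, pow_mul, frobenius, map_pow,
    map_add, map_one, expand_X]

theorem binomialSeries_prime_mul (n : ℤ) :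
    binomialSeries A ((p : ℤ) * n) = expand p hp.out.ne_zero (binomialSeries A n) := by
  obtain ⟨k, rfl | rfl⟩ := Int.eq_nat_or_neg n
  · exact binomialSeries_prime_mul_natCast A p k
  · have inv_left : binomialSeries A ((p : ℤ) * -k) * binomialSeries A ((p : ℤ) * k) = 1 := by
      rw [← binomialSeries_add, mul_neg, neg_add_cancel, binomialSeries_zero]
    have inv_right : expand p hp.out.ne_zero (binomialSeries A (k : ℤ)) *
        expand p hp.out.ne_zero (binomialSeries A (-k : ℤ)) = 1 := by
      rw [← map_mul, ← binomialSeries_add, add_neg_cancel, binomialSeries_zero, map_one]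
    rw [binomialSeries_prime_mul_natCast] at inv_left
    exact left_inv_eq_right_inv inv_left inv_right

end PowerSeries

open PowerSeries in
theorem Ring.intCast_choose_prime_mul_prime_mul (A : Type*) [CommRing A] (p : ℕ)
    [Fact p.Prime] [CharP A p] (n : ℤ) (k : ℕ) :
    ((Ring.choose ((p : ℤ) * n) (p * k) : ℤ) : A) = ((Ring.choose n k : ℤ) : A) := by
  have := congrArg (coeff (p * k)) (binomialSeries_prime_mul A p n)
  simpa only [coeff_expand_mul, binomialSeries_coeff, Int.smul_one_eq_cast] using this

/-- Let `p` be a prime number, `a` an integer, and `b` a natural number. Then for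
every integer `m`, `C(a·(p·m), p·b)` is congruent to `C(a·m, b)` modulo `p`. -/
theorem stmt2 (p : ℕ) (hp : p.Prime) (a : ℤ) (b : ℕ) (m : ℤ) :
    ((Ring.choose (a * ((p : ℤ) * m)) (p * b) : ℤ) : ZMod p) =
      ((Ring.choose (a * m) b : ℤ) : ZMod p) := by
  have := Fact.mk hp
  rw [mul_left_comm]
  exact Ring.intCast_choose_prime_mul_prime_mul (ZMod p) p (a * m) b
end

section
/- Let p be a prime number, c an integer, and b a natural number. Then for every integer m, C(p·m + p·c, p·b) is congruent to C(m + c, b) modulo p. -/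
/-!
Put `N = m + c`. Lucas' theorem gives `C(p n + r, p k) ≡ C(r, 0) C(n, k) = C(n, k)` for natural
`n` and `r < p`, which is the case `N ≥ 0`. For `N = -(t + 1)`, the reflection
`C(-(s + 1), k) = (-1)^k C(s + k, k)` applied to `p N = -(p t + (p - 1)) - 1` turns
`C(p N, p k)` into `(-1)^(p k) C(p (t + k) + (p - 1), p k)`; Lucas with remainder `p - 1` and
`(-1)^p = -1` in `𝔽_p` reduce this to `(-1)^k C(t + k, k) = C(N, k)`.
-/

lemma Ring.choose_neg_natCast_sub_one (s k : ℕ) :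
    Ring.choose (-(s : ℤ) - 1) k = (-1) ^ k * ((s + k).choose k : ℤ) := by
  have hs : (s : ℤ) + 1 + k - 1 = ((s + k : ℕ) : ℤ) := by push_cast; ring
  rw [show -(s : ℤ) - 1 = -((s : ℤ) + 1) by ring, Ring.choose_neg, hs, Ring.choose_natCast,
    Units.smul_def, Int.coe_negOnePow_natCast, smul_eq_mul]

section Lucas

variable {p : ℕ} [Fact p.Prime]

lemma choose_mul_add_mul_zmod {r : ℕ} (hr : r < p) (n k : ℕ) :
    (((p * n + r).choose (p * k) : ℕ) : ZMod p) = (n.choose k : ZMod p) := by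
  have hp := (Fact.out : p.Prime).pos
  have hmod : (p * n + r) % p = r := by rw [Nat.mul_add_mod, Nat.mod_eq_of_lt hr]
  have hdiv : (p * n + r) / p = n := by
    rw [Nat.mul_add_div hp, Nat.div_eq_of_lt hr, add_zero]
  have h := (ZMod.intCast_eq_intCast_iff _ _ p).mpr
    (Choose.choose_modEq_choose_mod_mul_choose_div (p := p) (n := p * n + r) (k := p * k))
  rw [hmod, hdiv, Nat.mul_mod_right, Nat.mul_div_cancel_left _ hp, Nat.choose_zero_right] at h
  exact_mod_cast h.trans (by push_cast; ring)

lemma Int.choose_mul_mul_zmod (N : ℤ) (k : ℕ) :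
    ((Ring.choose ((p : ℤ) * N) (p * k) : ℤ) : ZMod p) = ((Ring.choose N k : ℤ) : ZMod p) := by
  have hp := (Fact.out : p.Prime).pos
  rcases N with n | t
  · have h := choose_mul_add_mul_zmod hp n k
    rw [add_zero] at h
    simpa only [Int.ofNat_eq_natCast, ← Nat.cast_mul, Ring.choose_natCast, Int.cast_natCast]
      using h
  · have hN : (Int.negSucc t : ℤ) = -(t : ℤ) - 1 := by omega
    have hpN : (p : ℤ) * (-(t : ℤ) - 1) = -((p * t + (p - 1) : ℕ) : ℤ) - 1 := by
      push_cast [Nat.cast_sub hp]; ring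
    have hsum : p * t + (p - 1) + p * k = p * (t + k) + (p - 1) := by ring
    have hsign : ((-1 : ZMod p) ^ (p * k)) = (-1) ^ k := by rw [pow_mul, ZMod.pow_card]
    rw [hN, hpN, Ring.choose_neg_natCast_sub_one, Ring.choose_neg_natCast_sub_one, hsum]
    push_cast
    rw [hsign, choose_mul_add_mul_zmod (Nat.sub_lt hp one_pos)]

end Lucas

/-- Let `p` be a prime number, `c` an integer, and `b` a natural number. Then for
every integer `m`, `C(p·m + p·c, p·b)` is congruent to `C(m + c, b)` modulo `p`. -/
theorem stmt3 (p : ℕ) (hp : p.Prime) (c : ℤ) (b : ℕ) (m : ℤ) :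
    ((Ring.choose ((p : ℤ) * m + (p : ℤ) * c) (p * b) : ℤ) : ZMod p) =
      ((Ring.choose (m + c) b : ℤ) : ZMod p) := by
  have : Fact p.Prime := ⟨hp⟩
  rw [← mul_add, Int.choose_mul_mul_zmod]
end

section
/- For every integer n and all natural numbers m and k, the identity C(n, m)·C(n, k) = Σ_{i=0}^{k} C(m+k-i, k)·C(k, i)·C(n, m+k-i) holds in ℤ. -/
/-! Since `C(m+k-i, k) C(n, m+k-i) = C(n, k) C(n-k, m-i)` for `i ≤ m`, while the terms with
`i > m` vanish, the right side is `C(n, k)` times the Vandermonde expansion of `C(k + (n-k), m)`. -/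

open Finset

namespace Ring

variable {R : Type*} [CommRing R] [BinomialRing R]

theorem choose_eq_sum_range_natCast_choose_mul_choose_sub (r : R) (k m : ℕ) :
    choose r m = ∑ i ∈ range (m + 1), (k.choose i : R) * choose (r - k) (m - i) := by
  have h := add_choose_eq (r := (k : R)) (s := r - k) m (Commute.all _ _)
  rw [add_sub_cancel, Nat.sum_antidiagonal_eq_sum_range_succ_mk] at h
  simpa only [choose_natCast] using h

theorem natCast_choose_mul_choose_add_sub (r : R) {k m i : ℕ} (him : i ≤ m) :
    ((m + k - i).choose k : R) * choose r (m + k - i) =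
      choose r k * choose (r - k) (m - i) := by
  have h := choose_smul_choose r (show k ≤ m + k - i by omega)
  rwa [nsmul_eq_mul, show m + k - i - k = m - i by omega] at h

end Ring

/-- For every integer `n` and all natural numbers `m` and `k`, the identity
`C(n, m)·C(n, k) = Σ_{i=0}^{k} C(m+k-i, k)·C(k, i)·C(n, m+k-i)` holds in `ℤ`. -/
theorem stmt4 (n : ℤ) (m k : ℕ) :
    Ring.choose n m * Ring.choose n k =
      ∑ i ∈ Finset.range (k + 1),
        Ring.choose ((m + k - i : ℕ) : ℤ) k * Ring.choose ((k : ℤ)) i *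
          Ring.choose n (m + k - i) := by
  have hsub : ∀ {a}, min k m ≤ a → range (min k m + 1) ⊆ range (a + 1) := fun h =>
    range_subset_range.mpr (by omega)
  simp only [Ring.choose_natCast]
  calc Ring.choose n m * Ring.choose n k
      = ∑ i ∈ range (m + 1),
          Ring.choose n k * ((k.choose i : ℤ) * Ring.choose (n - k) (m - i)) := by
        rw [Ring.choose_eq_sum_range_natCast_choose_mul_choose_sub n k m, mul_comm, mul_sum]
    _ = ∑ i ∈ range (min k m + 1),
          Ring.choose n k * ((k.choose i : ℤ) * Ring.choose (n - k) (m - i)) := by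
        refine (sum_subset (hsub (min_le_right k m)) fun i hi hi' => ?_).symm
        rw [Nat.choose_eq_zero_of_lt (by rw [mem_range] at hi hi'; omega)]
        simp
    _ = ∑ i ∈ range (min k m + 1),
          ((m + k - i).choose k : ℤ) * k.choose i * Ring.choose n (m + k - i) := by
        refine sum_congr rfl fun i hi => ?_
        have him : i ≤ m := by rw [mem_range] at hi; omega
        rw [mul_right_comm, Ring.natCast_choose_mul_choose_add_sub n him]
        ring
    _ = _ := by
        refine sum_subset (hsub (min_le_left k m)) fun i hi hi' => ?_
        rw [Nat.choose_eq_zero_of_lt (by rw [mem_range] at hi hi'; omega)]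
        simp
end

section
/- Let p be a prime number, b' a natural number, and b'' a natural number with b'' < p. Then for every integer n, C(n, p·b')·C(n, b'') is congruent to C(n, p·b' + b'') modulo p. -/
/-!
Since `p ∣ C(p ^ M, j)` for `0 < j < p ^ M`, Vandermonde's identity shows that `n ↦ C(n, k) mod p`
is periodic with period `p ^ M` whenever `k < p ^ M`. Replacing `n` by its residue modulo a large
power of `p` therefore reduces the claim to natural numbers, where it is the first step of
Lucas's theorem: the lower indices `p * b'`, `b''` and `p * b' + b''` have the `p`-adic
splittings `(0, b')`, `(b'', 0)` and `(b'', b')`.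
-/

open Function

namespace Ring

theorem intCast_choose_periodic {p : ℕ} (hp : p.Prime) {M k : ℕ} (hk : k < p ^ M) :
    Periodic (fun n : ℤ => ((choose n k : ℤ) : ZMod p)) ((p ^ M : ℕ) : ℤ) := by
  intro n
  simp only [add_choose_eq k (Commute.all n _), choose_natCast, Int.cast_sum, Int.cast_mul,
    Int.cast_natCast]
  rw [Finset.sum_eq_single_of_mem (k, 0) (by simp)]
  · simp
  rintro ⟨i, j⟩ hij hne
  have hj : j ≠ 0 := by
    rintro rfl
    exact hne (by simpa using hij)
  have hjk : j ≠ p ^ M := by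
    have : i + j = k := by simpa using hij
    omega
  simp [(ZMod.natCast_eq_zero_iff _ _).mpr (hp.dvd_choose_pow hj hjk)]

theorem intCast_choose_eq_choose_toNat_emod {p : ℕ} (hp : p.Prime) {M k : ℕ} (hk : k < p ^ M)
    (n : ℤ) :
    ((choose n k : ℤ) : ZMod p) = ((n % (p ^ M : ℕ)).toNat.choose k : ZMod p) := by
  have hpos : (0 : ℤ) < (p ^ M : ℕ) := by exact_mod_cast pow_pos hp.pos M
  rw [← Int.cast_natCast, ← choose_natCast, Int.toNat_of_nonneg (Int.emod_nonneg _ hpos.ne'),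
    Int.emod_def, mul_comm]
  exact ((intCast_choose_periodic hp hk).sub_int_mul_eq _).symm

end Ring

namespace Choose

theorem choose_mul_choose_modEq_choose_mul_add {p N b' b'' : ℕ} [hp : Fact p.Prime]
    (hb'' : b'' < p) :
    N.choose (p * b') * N.choose b'' ≡ N.choose (p * b' + b'') [ZMOD p] := by
  have hpos := hp.out.pos
  have high := choose_modEq_choose_mod_mul_choose_div (n := N) (k := p * b') (p := p)
  have low := choose_modEq_choose_mod_mul_choose_div (n := N) (k := b'') (p := p)
  have sum := choose_modEq_choose_mod_mul_choose_div (n := N) (k := p * b' + b'') (p := p)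
  simp only [Nat.mul_mod_right, Nat.mul_div_cancel_left _ hpos, Nat.mul_add_mod,
    Nat.mod_eq_of_lt hb'', Nat.mul_add_div hpos, Nat.div_eq_of_lt hb'', Nat.add_zero,
    Nat.choose_zero_right, Nat.cast_one, one_mul, mul_one] at high low sum
  calc (N.choose (p * b') * N.choose b'' : ℤ)
      ≡ (N / p).choose b' * (N % p).choose b'' [ZMOD p] := high.mul low
    _ ≡ N.choose (p * b' + b'') [ZMOD p] := by rw [mul_comm]; exact sum.symm

end Choose

/-- Let `p` be a prime number, `b'` a natural number, and `b''` a natural number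
with `b'' < p`. Then for every integer `n`, `C(n, p·b')·C(n, b'')` is congruent to
`C(n, p·b' + b'')` modulo `p`. -/
theorem stmt5 (p : ℕ) (hp : p.Prime) (b' b'' : ℕ) (hb'' : b'' < p) (n : ℤ) :
    ((Ring.choose n (p * b') * Ring.choose n b'' : ℤ) : ZMod p) =
      ((Ring.choose n (p * b' + b'') : ℤ) : ZMod p) := by
  have := Fact.mk hp
  obtain ⟨M, hM⟩ : ∃ M, p * b' + b'' < p ^ M := ⟨_, Nat.lt_pow_self hp.one_lt⟩
  rw [Int.cast_mul, Ring.intCast_choose_eq_choose_toNat_emod hp (by omega : p * b' < p ^ M),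
    Ring.intCast_choose_eq_choose_toNat_emod hp (by omega : b'' < p ^ M),
    Ring.intCast_choose_eq_choose_toNat_emod hp hM]
  exact_mod_cast (ZMod.intCast_eq_intCast_iff _ _ _).mpr
    (Choose.choose_mul_choose_modEq_choose_mul_add hb'')
end

section
/- Let p be a prime number, ℓ ≥ 1 a natural number, c₁,…,c_ℓ integers, N an integer, and r a natural number not divisible by p. Then for every tuple of integers (x₁,…,x_ℓ), the product C(Σ_{i=1}^{ℓ} c_i·x_i + p·N, r) · ∏_{j=1}^{ℓ} C(x_j - 1, p-1) is congruent to 0 modulo p. -/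
/-!
Everything rests on the absorption identity
`(n + 1) · C(m, n + 1) = m · C(m - 1, n)` read in `𝔽_p`. If every `x_j` is divisible by `p`,
then so is `m = Σ c_i x_i + pN`, and since `r` is a unit mod `p` the first factor vanishes.
Otherwise some `x_j` is a unit mod `p`, and taking `n + 1 = p` kills `C(x_j - 1, p - 1)`.
-/

namespace Ring

theorem succ_nsmul_choose_succ {R : Type*} [NonAssocRing R] [Pow R ℕ] [NatPowAssoc R]
    [BinomialRing R] (r : R) (n : ℕ) :
    (n + 1) • choose r (n + 1) = r * choose (r - 1) n := by
  simpa using choose_smul_choose r (Nat.le_add_left 1 n)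

end Ring

namespace ZMod

variable {p : ℕ} [Fact p.Prime]

theorem succ_mul_intCast_choose_succ (m : ℤ) (n : ℕ) :
    ((n + 1 : ℕ) : ZMod p) * ((Ring.choose m (n + 1) : ℤ) : ZMod p) =
      (m : ZMod p) * ((Ring.choose (m - 1) n : ℤ) : ZMod p) := by
  exact_mod_cast congrArg (Int.cast : ℤ → ZMod p) (Ring.succ_nsmul_choose_succ m n)

theorem intCast_choose_eq_zero_of_dvd {m : ℤ} {r : ℕ} (hm : (p : ℤ) ∣ m) (hr : ¬ p ∣ r) :
    ((Ring.choose m r : ℤ) : ZMod p) = 0 := by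
  obtain ⟨n, rfl⟩ : ∃ n, r = n + 1 := Nat.exists_eq_succ_of_ne_zero (by rintro rfl; exact hr (dvd_zero p))
  have hr₀ : ((n + 1 : ℕ) : ZMod p) ≠ 0 := by rwa [Ne, natCast_eq_zero_iff]
  have h := succ_mul_intCast_choose_succ (p := p) m n
  rw [(intCast_zmod_eq_zero_iff_dvd m p).mpr hm, zero_mul] at h
  exact (mul_eq_zero.mp h).resolve_left hr₀

theorem intCast_choose_sub_one_pred_eq_zero {y : ℤ} (hy : ¬ (p : ℤ) ∣ y) :
    ((Ring.choose (y - 1) (p - 1) : ℤ) : ZMod p) = 0 := by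
  have hy₀ : (y : ZMod p) ≠ 0 := by rwa [Ne, intCast_zmod_eq_zero_iff_dvd]
  have h := succ_mul_intCast_choose_succ (p := p) y (p - 1)
  rw [Nat.sub_add_cancel (Fact.out : p.Prime).one_le, natCast_self, zero_mul] at h
  exact (mul_eq_zero.mp h.symm).resolve_left hy₀

end ZMod

theorem stmt7_general (p : ℕ) (hp : p.Prime) (ℓ : ℕ) (c : Fin ℓ → ℤ)
    (N : ℤ) (r : ℕ) (hr : ¬ p ∣ r) (x : Fin ℓ → ℤ) :
    ((Ring.choose (∑ i, c i * x i + (p : ℤ) * N) r *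
        ∏ j, Ring.choose (x j - 1) (p - 1) : ℤ) : ZMod p) = 0 := by
  have : Fact p.Prime := ⟨hp⟩
  rw [Int.cast_mul]
  by_cases hx : ∀ j, (p : ℤ) ∣ x j
  · have hm : (p : ℤ) ∣ ∑ i, c i * x i + p * N :=
      dvd_add (Finset.dvd_sum fun i _ => (hx i).mul_left (c i)) (dvd_mul_right _ N)
    rw [ZMod.intCast_choose_eq_zero_of_dvd hm hr, zero_mul]
  · obtain ⟨j, hj⟩ := not_forall.mp hx
    rw [Int.cast_prod, Finset.prod_eq_zero (Finset.mem_univ j)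
      (ZMod.intCast_choose_sub_one_pred_eq_zero hj), mul_zero]

/-- Let `p` be a prime number, `ℓ ≥ 1`, `c₁,…,c_ℓ` integers, `N` an integer, and
`r` a natural number not divisible by `p`. Then for every tuple of integers
`(x₁,…,x_ℓ)`, the product `C(Σ c_i·x_i + p·N, r) · ∏_j C(x_j - 1, p-1)` is
congruent to `0` modulo `p`. -/
theorem stmt7 (p : ℕ) (hp : p.Prime) (ℓ : ℕ) (hℓ : 1 ≤ ℓ) (c : Fin ℓ → ℤ)
    (N : ℤ) (r : ℕ) (hr : ¬ p ∣ r) (x : Fin ℓ → ℤ) :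
    ((Ring.choose (∑ i, c i * x i + (p : ℤ) * N) r *
        ∏ j, Ring.choose (x j - 1) (p - 1) : ℤ) : ZMod p) = 0 :=
  stmt7_general p hp ℓ c N r hr x
end

section
/- Let p be a prime number, 𝔽_p = ZMod p, and ℤ_p the ring of p-adic integers. Let Fr : LocallyConstant(ℤ_p, 𝔽_p) → LocallyConstant(ℤ_p, 𝔽_p) be the ring homomorphism f ↦ (x ↦ f(p·x)). Define φ : LocallyConstant(ℤ_p, 𝔽_p) → LocallyConstant(ℤ_p, 𝔽_p) by φ(f)(x) = f(y) if x = p·y for some y ∈ ℤ_p, and φ(f)(x) = 0 if x ∉ p·ℤ_p. Then φ is additive, multiplicative (φ(f·g) = φ(f)·φ(g)), sends the constant function 1 to the idempotent indicator function e of p·ℤ_p (so φ is a unital ring homomorphism onto the corner e·LocallyConstant(ℤ_p, 𝔽_p)), and satisfies Fr ∘ φ = id. -/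
open scoped Classical

section Aux

variable {p : ℕ} [Fact p.Prime]

private lemma stmt9_pne : (p : ℤ_[p]) ≠ 0 := by
  exact_mod_cast Nat.cast_ne_zero.mpr (Fact.out (p := p.Prime)).ne_zero

private lemma stmt9_mem_iff (x : ℤ_[p]) : (∃ y : ℤ_[p], x = (p:ℤ_[p]) * y) ↔ ‖x‖ < 1 := by
  rw [PadicInt.norm_lt_one_iff_dvd]
  exact ⟨fun ⟨y,h⟩ => ⟨y,h⟩, fun ⟨y,h⟩ => ⟨y,h⟩⟩

noncomputable def stmt9Fun (p : ℕ) [Fact p.Prime] (f : LocallyConstant ℤ_[p] (ZMod p)) :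
    ℤ_[p] → ZMod p :=
  fun x => if h : ∃ y : ℤ_[p], x = (p:ℤ_[p]) * y then f h.choose else 0

private lemma stmt9Fun_mul (f : LocallyConstant ℤ_[p] (ZMod p)) (y : ℤ_[p]) :
    stmt9Fun p f ((p:ℤ_[p]) * y) = f y := by
  have h : ∃ y' : ℤ_[p], (p:ℤ_[p]) * y = (p:ℤ_[p]) * y' := ⟨y, rfl⟩
  have := h.choose_spec
  rw [stmt9Fun, dif_pos h, mul_left_cancel₀ stmt9_pne this.symm]

private lemma stmt9Fun_not (f : LocallyConstant ℤ_[p] (ZMod p)) (x : ℤ_[p])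
    (h : ¬ ∃ y : ℤ_[p], x = (p:ℤ_[p]) * y) : stmt9Fun p f x = 0 := dif_neg h

private lemma stmt9Fun_lc (f : LocallyConstant ℤ_[p] (ZMod p)) :
    IsLocallyConstant (stmt9Fun p f) := by
  have hp : (0:ℝ) < p := by exact_mod_cast (Fact.out (p := p.Prime)).pos
  rw [IsLocallyConstant.iff_exists_open]
  intro x
  by_cases hx : ∃ y : ℤ_[p], x = (p:ℤ_[p]) * y
  · obtain ⟨y, rfl⟩ := hx
    have hopen : IsOpen (f ⁻¹' {f y}) := f.isLocallyConstant {f y}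
    obtain ⟨ε, hε, hball⟩ := Metric.isOpen_iff.mp hopen y rfl
    refine ⟨Metric.ball ((p:ℤ_[p]) * y) (min (ε * (p:ℝ)⁻¹) 1), Metric.isOpen_ball, ?_, ?_⟩
    · apply Metric.mem_ball_self
      have : (0:ℝ) < (p:ℝ)⁻¹ := by positivity
      exact lt_min (by positivity) one_pos
    · intro x' hx'
      rw [Metric.mem_ball, dist_eq_norm] at hx'
      have h1 : ‖x' - (p:ℤ_[p]) * y‖ < 1 := lt_of_lt_of_le hx' (min_le_right _ _)
      have hpy : ‖(p:ℤ_[p]) * y‖ < 1 := by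
        rw [← stmt9_mem_iff]; exact ⟨y, rfl⟩
      have hnx' : ‖x'‖ < 1 := by
        calc ‖x'‖ = ‖(x' - (p:ℤ_[p]) * y) + (p:ℤ_[p]) * y‖ := by ring_nf
          _ ≤ max ‖x' - (p:ℤ_[p]) * y‖ ‖(p:ℤ_[p]) * y‖ := PadicInt.nonarchimedean _ _
          _ < 1 := max_lt h1 hpy
      obtain ⟨y', rfl⟩ := (stmt9_mem_iff x').mpr hnx'
      rw [stmt9Fun_mul, stmt9Fun_mul]
      have h2 : ‖(p:ℤ_[p]) * y' - (p:ℤ_[p]) * y‖ < ε * (p:ℝ)⁻¹ :=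
        lt_of_lt_of_le hx' (min_le_left _ _)
      have h3 : ‖y' - y‖ < ε := by
        rw [← mul_sub, norm_mul, PadicInt.norm_p, mul_comm] at h2
        have hp0 : (0:ℝ) < (p:ℝ)⁻¹ := by positivity
        exact lt_of_mul_lt_mul_right h2 hp0.le
      have : y' ∈ f ⁻¹' {f y} := hball (by rwa [Metric.mem_ball, dist_eq_norm])
      exact this
  · refine ⟨Metric.ball x 1, Metric.isOpen_ball, Metric.mem_ball_self one_pos, ?_⟩
    intro x' hx'
    rw [Metric.mem_ball, dist_eq_norm] at hx'
    have hx'n : ¬ ∃ y : ℤ_[p], x' = (p:ℤ_[p]) * y := by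
      intro h
      apply hx
      rw [stmt9_mem_iff] at h ⊢
      calc ‖x‖ = ‖(x - x') + x'‖ := by ring_nf
        _ ≤ max ‖x - x'‖ ‖x'‖ := PadicInt.nonarchimedean _ _
        _ < 1 := max_lt (by rwa [← norm_neg, neg_sub] at hx') h
    rw [stmt9Fun_not f _ hx'n, stmt9Fun_not f _ hx]

noncomputable def stmt9Phi (p : ℕ) [Fact p.Prime] (f : LocallyConstant ℤ_[p] (ZMod p)) :
    LocallyConstant ℤ_[p] (ZMod p) := ⟨stmt9Fun p f, stmt9Fun_lc f⟩

end Aux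

/-- Let `p` be prime, `𝔽_p = ZMod p`, `ℤ_p` the `p`-adic integers, and
`Fr : LocallyConstant(ℤ_p, 𝔽_p) → LocallyConstant(ℤ_p, 𝔽_p)` the ring homomorphism
`f ↦ (x ↦ f (p·x))`.  The map `φ` defined by `φ(f)(x) = f(y)` if `x = p·y` and
`φ(f)(x) = 0` if `x ∉ p·ℤ_p` is additive, multiplicative, sends `1` to the idempotent
indicator function `e` of `p·ℤ_p`, has image the corner `e·LocallyConstant(ℤ_p, 𝔽_p)`,
and satisfies `Fr ∘ φ = id`. -/
theorem stmt9 (p : ℕ) [Fact p.Prime]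
    (Fr : LocallyConstant ℤ_[p] (ZMod p) →+* LocallyConstant ℤ_[p] (ZMod p))
    (hFr : ∀ f : LocallyConstant ℤ_[p] (ZMod p), ∀ x : ℤ_[p], Fr f x = f ((p : ℤ_[p]) * x)) :
    ∃ φ : LocallyConstant ℤ_[p] (ZMod p) → LocallyConstant ℤ_[p] (ZMod p),
      -- defining property of φ
      (∀ f : LocallyConstant ℤ_[p] (ZMod p), ∀ y : ℤ_[p], φ f ((p : ℤ_[p]) * y) = f y) ∧
      (∀ f : LocallyConstant ℤ_[p] (ZMod p), ∀ x : ℤ_[p],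
        (¬ ∃ y : ℤ_[p], x = (p : ℤ_[p]) * y) → φ f x = 0) ∧
      -- φ is additive and multiplicative
      (∀ f g : LocallyConstant ℤ_[p] (ZMod p), φ (f + g) = φ f + φ g) ∧
      (∀ f g : LocallyConstant ℤ_[p] (ZMod p), φ (f * g) = φ f * φ g) ∧
      -- φ 1 is the idempotent indicator function of p·ℤ_p
      (∀ x : ℤ_[p], φ 1 x = if ∃ y : ℤ_[p], x = (p : ℤ_[p]) * y then 1 else 0) ∧
      φ 1 * φ 1 = φ 1 ∧
      -- the image of φ is the corner (φ 1)·LocallyConstant(ℤ_p, 𝔽_p)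
      Set.range φ = {g : LocallyConstant ℤ_[p] (ZMod p) | φ 1 * g = g} ∧
      -- Fr ∘ φ = id
      (∀ f : LocallyConstant ℤ_[p] (ZMod p), Fr (φ f) = f) := by
  refine ⟨stmt9Phi p, fun f y => stmt9Fun_mul f y, fun f x h => stmt9Fun_not f x h, ?_, ?_, ?_, ?_, ?_, ?_⟩
  · -- additive
    intro f g
    ext x
    by_cases h : ∃ y : ℤ_[p], x = (p:ℤ_[p]) * y
    · obtain ⟨y, rfl⟩ := h
      simp [stmt9Phi, stmt9Fun_mul]
    · simp [stmt9Phi, stmt9Fun_not _ _ h]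
  · -- multiplicative
    intro f g
    ext x
    by_cases h : ∃ y : ℤ_[p], x = (p:ℤ_[p]) * y
    · obtain ⟨y, rfl⟩ := h
      simp [stmt9Phi, stmt9Fun_mul]
    · simp [stmt9Phi, stmt9Fun_not _ _ h]
  · -- indicator
    intro x
    by_cases h : ∃ y : ℤ_[p], x = (p:ℤ_[p]) * y
    · obtain ⟨y, rfl⟩ := h
      simp [stmt9Phi, stmt9Fun_mul, (⟨y, rfl⟩ : ∃ y' : ℤ_[p], (p:ℤ_[p]) * y = (p:ℤ_[p]) * y')]
    · simp only [if_neg h]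
      exact stmt9Fun_not 1 x h
  · -- idempotent
    ext x
    by_cases h : ∃ y : ℤ_[p], x = (p:ℤ_[p]) * y
    · obtain ⟨y, rfl⟩ := h
      simp [stmt9Phi, stmt9Fun_mul]
    · simp [stmt9Phi, stmt9Fun_not _ _ h]
  · -- range
    ext g
    constructor
    · rintro ⟨f, rfl⟩
      show stmt9Phi p 1 * stmt9Phi p f = stmt9Phi p f
      ext x
      by_cases h : ∃ y : ℤ_[p], x = (p:ℤ_[p]) * y
      · obtain ⟨y, rfl⟩ := h
        simp [stmt9Phi, stmt9Fun_mul]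
      · simp [stmt9Phi, stmt9Fun_not _ _ h]
    · intro hg
      refine ⟨Fr g, ?_⟩
      ext x
      by_cases h : ∃ y : ℤ_[p], x = (p:ℤ_[p]) * y
      · obtain ⟨y, rfl⟩ := h
        show stmt9Fun p (Fr g) ((p:ℤ_[p]) * y) = g ((p:ℤ_[p]) * y)
        rw [stmt9Fun_mul, hFr]
      · show stmt9Fun p (Fr g) x = g x
        rw [stmt9Fun_not _ _ h]
        have := congrArg (fun h : LocallyConstant ℤ_[p] (ZMod p) => h x) hg
        simp only [LocallyConstant.mul_apply] at this
        rw [← this]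
        have h1 : stmt9Phi p 1 x = 0 := stmt9Fun_not 1 x h
        rw [show (stmt9Phi p 1) x * g x = 0 * g x from by rw [h1], zero_mul]
  · -- Fr ∘ φ = id
    intro f
    ext x
    rw [hFr, show (stmt9Phi p f) ((p:ℤ_[p]) * x) = f x from stmt9Fun_mul f x]
end
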